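/- arXiv:1901.01432 — 3 statements merged into one kernel-verified Lean document; each statement's English description precedes it below -/
import Mathlib

section
/- Let R > 0, let v ∈ ℝ² with ‖v‖ = q > 0, and let U be uniformly distributed on the closed disc of radius R centered at v. Define f : (0,∞) → ℝ by f(g) = (2g/(πR²))·arccos((g² + q² − R²)/(2gq)) for |R − q| < g < R + q, f(g) = 2g/R² for 0 < g < R − q (this case is vacuous when q ≥ R), and f(g) = 0 otherwise. Then for every t ≥ 0, P(‖U‖ ≤ t) = ∫₀ᵗ f(g) dg; i.e., f is the density of the distance ‖U‖ from the origin. -/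
open MeasureTheory

/-- The density of the distance from the origin to a point uniformly distributed in a disc of
radius `R` whose center is at distance `q` from the origin (eq. (25) of the paper). -/
noncomputable def maternDistanceDensity (R q : ℝ) (g : ℝ) : ℝ :=
  if |R - q| < g ∧ g < R + q then
    (2 * g / (Real.pi * R ^ 2)) * Real.arccos ((g ^ 2 + q ^ 2 - R ^ 2) / (2 * g * q))
  else if 0 < g ∧ g < R - q then 2 * g / R ^ 2
  else 0

/-!
After a linear isometry onto `ℂ` taking the centre to the positive real `q`, the event is the
intersection `closedBall 0 t ∩ closedBall q R`, whose area we compute in polar coordinates. By the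
law of cosines, the circle of radius `g` meets `closedBall q R` in the arc
`|θ| ≤ arccos ((g² + q² - R²) / (2 g q))`, so the area is `∫₀ᵗ 2 g arccos (…) dg`. Apart from
`g = |R - q|` and `g = R + q`, the density is this integrand divided by `π R²`: the arccos is `π`
when the circle lies inside the disc and `0` when it misses it.
-/

open Real Set Metric

namespace Real

theorem abs_le_arccos_of_le_cos {c θ : ℝ} (hθ : |θ| ≤ π) (h : c ≤ cos θ) : |θ| ≤ arccos c := by
  rw [← arccos_cos (abs_nonneg θ) hθ, cos_abs]
  exact arccos_le_arccos h

theorem le_cos_of_abs_lt_arccos {c θ : ℝ} (hθ : |θ| ≤ π) (h : |θ| < arccos c) : c ≤ cos θ := by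
  by_contra! hlt
  have := arccos_le_arccos hlt.le
  rw [← cos_abs, arccos_cos (abs_nonneg θ) hθ] at this
  linarith

theorem volume_setOf_le_cos_inter_Ioo (c : ℝ) :
    volume ({θ | c ≤ cos θ} ∩ Ioo (-π) π) = ENNReal.ofReal (2 * arccos c) := by
  have hvol : ∀ A : ℝ, ENNReal.ofReal (2 * A) = ENNReal.ofReal (A - -A) := fun A => by ring_nf
  refine le_antisymm ?_ ?_
  · calc volume ({θ | c ≤ cos θ} ∩ Ioo (-π) π) ≤ volume (Icc (-arccos c) (arccos c)) := by
          refine measure_mono fun θ ⟨hc, hθ⟩ => abs_le.mp ?_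
          exact abs_le_arccos_of_le_cos (abs_le.mpr ⟨hθ.1.le, hθ.2.le⟩) hc
      _ = _ := by rw [volume_Icc, hvol]
  · calc ENNReal.ofReal (2 * arccos c) = volume (Ioo (-arccos c) (arccos c)) := by
          rw [volume_Ioo, hvol]
      _ ≤ _ := by
          refine measure_mono fun θ hθ => ?_
          have hlt : |θ| < arccos c := abs_lt.mpr hθ
          have hπ : |θ| < π := hlt.trans_le (arccos_le_pi c)
          exact ⟨le_cos_of_abs_lt_arccos hπ.le hlt, abs_lt.mp hπ⟩

end Real

namespace Complex

theorem norm_polarCoord_symm_sub_ofReal_sq (r θ q : ℝ) :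
    ‖Complex.polarCoord.symm (r, θ) - q‖ ^ 2 = r ^ 2 + q ^ 2 - 2 * r * q * Real.cos θ := by
  rw [Complex.sq_norm, normSq_apply]
  simp only [Complex.polarCoord_symm_apply, sub_re, sub_im, mul_re, mul_im, add_re, add_im,
    ofReal_re, ofReal_im, I_re, I_im]
  linear_combination r ^ 2 * Real.sin_sq_add_cos_sq θ

theorem polarCoord_symm_mem_closedBall_ofReal_iff {r q R : ℝ} (hr : 0 < r) (hq : 0 < q)
    (hR : 0 ≤ R) (θ : ℝ) :
    Complex.polarCoord.symm (r, θ) ∈ closedBall (q : ℂ) R ↔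
      (r ^ 2 + q ^ 2 - R ^ 2) / (2 * r * q) ≤ Real.cos θ := by
  rw [mem_closedBall, dist_eq_norm,
    ← sq_le_sq₀ (norm_nonneg (Complex.polarCoord.symm (r, θ) - q)) hR,
    norm_polarCoord_symm_sub_ofReal_sq, div_le_iff₀ (by positivity)]
  constructor <;> intro h <;> linarith

theorem volume_eq_lintegral_polarCoord {s : Set ℂ} (hs : MeasurableSet s) :
    volume s = ∫⁻ r in Ioi 0,
      ENNReal.ofReal r * volume ({θ | Complex.polarCoord.symm (r, θ) ∈ s} ∩ Ioo (-π) π) := by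
  have hsymm : Measurable (fun p : ℝ × ℝ => Complex.polarCoord.symm p) := by
    simp only [Complex.polarCoord_symm_apply]; fun_prop
  rw [← lintegral_indicator_one hs, ← Complex.lintegral_comp_polarCoord_symm, polarCoord_target,
    Measure.volume_eq_prod, ← Measure.prod_restrict, lintegral_prod]
  swap
  · exact (measurable_fst.ennreal_ofReal.smul
      ((measurable_const.indicator hs).comp hsymm)).aemeasurable
  refine lintegral_congr fun r => ?_
  have hslice : MeasurableSet {θ : ℝ | Complex.polarCoord.symm (r, θ) ∈ s} :=
    hs.preimage (hsymm.comp measurable_prodMk_left)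
  simp only [smul_eq_mul]
  rw [lintegral_const_mul' _ _ ENNReal.ofReal_ne_top, ← Measure.restrict_apply hslice,
    ← lintegral_indicator_one hslice]
  rfl

end Complex

theorem LinearIsometryEquiv.volume_closedBall_inter_closedBall {E F : Type*}
    [NormedAddCommGroup E] [InnerProductSpace ℝ E] [FiniteDimensional ℝ E]
    [MeasurableSpace E] [BorelSpace E]
    [NormedAddCommGroup F] [InnerProductSpace ℝ F] [FiniteDimensional ℝ F]
    [MeasurableSpace F] [BorelSpace F]
    (f : E ≃ₗᵢ[ℝ] F) (x y : E) (r s : ℝ) :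
    volume (closedBall (f x) r ∩ closedBall (f y) s) =
      volume (closedBall x r ∩ closedBall y s) := by
  rw [← f.measurePreserving.measure_preimage
      (measurableSet_closedBall.inter measurableSet_closedBall).nullMeasurableSet,
    preimage_inter, f.isometry.preimage_closedBall, f.isometry.preimage_closedBall]

theorem EuclideanSpace.exists_linearIsometryEquiv_complex_apply_eq_norm
    (v : EuclideanSpace ℝ (Fin 2)) : ∃ e : EuclideanSpace ℝ (Fin 2) ≃ₗᵢ[ℝ] ℂ, e v = ‖v‖ := by
  set w := Complex.orthonormalBasisOneI.repr.symm v
  refine ⟨Complex.orthonormalBasisOneI.repr.symm.trans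
    (rotation (Circle.exp (-Complex.arg w))), ?_⟩
  have hw : ‖w‖ = ‖v‖ := LinearIsometryEquiv.norm_map _ v
  calc Circle.exp (-Complex.arg w) * w
      = Complex.exp (-Complex.arg w * Complex.I) *
          (‖w‖ * Complex.exp (Complex.arg w * Complex.I)) := by
        rw [Circle.coe_exp, Complex.ofReal_neg, Complex.norm_mul_exp_arg_mul_I]
    _ = ‖v‖ := by
        rw [mul_left_comm, ← Complex.exp_add, neg_mul, neg_add_cancel, Complex.exp_zero, mul_one,
          hw]

theorem volume_closedBall_zero_inter_closedBall_ofReal_eq_lintegral {R q : ℝ} (hR : 0 ≤ R)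
    (hq : 0 < q) (t : ℝ) :
    volume (closedBall (0 : ℂ) t ∩ closedBall (q : ℂ) R) =
      ∫⁻ r in Ioc 0 t, ENNReal.ofReal (2 * r * arccos ((r ^ 2 + q ^ 2 - R ^ 2) / (2 * r * q))) := by
  rw [Complex.volume_eq_lintegral_polarCoord
      (measurableSet_closedBall.inter measurableSet_closedBall), ← Ioi_inter_Iic,
    inter_comm (Ioi (0 : ℝ)), ← Measure.restrict_restrict measurableSet_Iic,
    ← lintegral_indicator measurableSet_Iic]
  refine setLIntegral_congr_fun measurableSet_Ioi fun r (hr : 0 < r) => ?_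
  have hnorm : ∀ θ, ‖Complex.polarCoord.symm (r, θ)‖ = r := fun θ => by
    rw [Complex.norm_polarCoord_symm, abs_of_pos hr]
  by_cases hrt : r ≤ t
  · have hslice : {θ | Complex.polarCoord.symm (r, θ) ∈ closedBall 0 t ∩ closedBall (q : ℂ) R} =
        {θ | (r ^ 2 + q ^ 2 - R ^ 2) / (2 * r * q) ≤ cos θ} := by
      ext θ
      simp only [mem_ofPred_eq, mem_inter_iff, mem_closedBall_zero_iff, hnorm, hrt, true_and,
        Complex.polarCoord_symm_mem_closedBall_ofReal_iff hr hq hR]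
    rw [indicator_of_mem (show r ∈ Iic t from hrt), hslice, Real.volume_setOf_le_cos_inter_Ioo,
      ← ENNReal.ofReal_mul hr.le]
    congr 1
    ring
  · have hslice :
        {θ | Complex.polarCoord.symm (r, θ) ∈ closedBall 0 t ∩ closedBall (q : ℂ) R} = ∅ := by
      refine eq_empty_of_forall_notMem fun θ hθ => hrt ?_
      rw [← hnorm θ, ← mem_closedBall_zero_iff]
      exact hθ.1
    rw [indicator_of_notMem (show r ∉ Iic t from hrt), hslice, empty_inter, measure_empty, mul_zero]

theorem volume_closedBall_zero_inter_closedBall_ofReal_eq_integral {R q : ℝ} (hR : 0 ≤ R)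
    (hq : 0 < q) (t : ℝ) :
    volume (closedBall (0 : ℂ) t ∩ closedBall (q : ℂ) R) =
      ENNReal.ofReal (∫ r in Ioc 0 t, 2 * r * arccos ((r ^ 2 + q ^ 2 - R ^ 2) / (2 * r * q))) := by
  have hfinite : volume (closedBall (0 : ℂ) t ∩ closedBall (q : ℂ) R) ≠ ⊤ :=
    ((measure_mono inter_subset_left).trans_lt measure_closedBall_lt_top).ne
  have hnonneg : ∀ᵐ r ∂volume.restrict (Ioc 0 t),
      0 ≤ 2 * r * arccos ((r ^ 2 + q ^ 2 - R ^ 2) / (2 * r * q)) :=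
    ae_restrict_of_forall_mem measurableSet_Ioc fun r hr =>
      mul_nonneg (by linarith [hr.1]) (arccos_nonneg _)
  rw [integral_eq_lintegral_of_nonneg_ae hnonneg (by fun_prop),
    ← volume_closedBall_zero_inter_closedBall_ofReal_eq_lintegral hR hq,
    ENNReal.ofReal_toReal hfinite]

theorem maternDistanceDensity_eq {R q g : ℝ} (hR : 0 ≤ R) (hq : 0 < q) (hg : 0 < g)
    (hg₁ : g ≠ |R - q|) (hg₂ : g ≠ R + q) :
    maternDistanceDensity R q g =
      2 * g * arccos ((g ^ 2 + q ^ 2 - R ^ 2) / (2 * g * q)) / (π * R ^ 2) := by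
  unfold maternDistanceDensity
  split_ifs with hlens hinner
  · ring
  · have hR' : 0 < R := by linarith [hinner.2]
    rw [arccos_of_le_neg_one (by rw [div_le_iff₀ (by positivity)]; nlinarith [hinner.2])]
    field_simp
  · have hfar : R + q < g ∨ (R ≤ q ∧ g < q - R) := by
      rcases not_and_or.mp hlens with h | h
      · rcases le_or_gt R q with hRq | hRq
        · rw [abs_of_nonpos (by linarith)] at h hg₁
          exact Or.inr ⟨hRq, lt_of_le_of_ne (by linarith) (by contrapose! hg₁; linarith)⟩
        · rw [abs_of_pos (by linarith)] at h hg₁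
          exact absurd ⟨hg, lt_of_le_of_ne (not_lt.mp h) hg₁⟩ hinner
      · exact Or.inl (lt_of_le_of_ne (not_lt.mp h) hg₂.symm)
    rw [arccos_of_one_le
      (by rw [le_div_iff₀ (by positivity)]; rcases hfar with h | h <;> nlinarith)]
    simp

/-- Let `R > 0`, let `v ∈ ℝ²` with `‖v‖ = q > 0`, and let `U` be uniformly distributed on the
closed disc of radius `R` centered at `v`. Then for every `t ≥ 0`,
`P(‖U‖ ≤ t) = ∫₀ᵗ f(g) dg` where `f = maternDistanceDensity R q`; i.e., `f` is the density of
the distance `‖U‖` from the origin. -/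
theorem uniform_disc_offset_norm_cdf (R : ℝ) (hR : 0 < R)
    (v : EuclideanSpace ℝ (Fin 2)) (q : ℝ) (hq : ‖v‖ = q) (hq0 : 0 < q)
    (t : ℝ) (ht : 0 ≤ t) :
    ((volume (Metric.closedBall v R))⁻¹ • volume.restrict (Metric.closedBall v R))
      {x : EuclideanSpace ℝ (Fin 2) | ‖x‖ ≤ t}
      = ENNReal.ofReal (∫ g in (0:ℝ)..t, maternDistanceDensity R q g) := by
  obtain ⟨e, he⟩ := EuclideanSpace.exists_linearIsometryEquiv_complex_apply_eq_norm v
  have hdensity : ∫ g in (0:ℝ)..t, maternDistanceDensity R q g =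
      (∫ g in Ioc 0 t, 2 * g * arccos ((g ^ 2 + q ^ 2 - R ^ 2) / (2 * g * q))) / (π * R ^ 2) := by
    rw [intervalIntegral.integral_of_le ht, ← integral_div]
    refine setIntegral_congr_ae measurableSet_Ioc ?_
    filter_upwards [Measure.ae_ne volume |R - q|, Measure.ae_ne volume (R + q)] with g hg₁ hg₂ hg
    exact maternDistanceDensity_eq hR.le hq0 hg.1 hg₁ hg₂
  have hball : {x : EuclideanSpace ℝ (Fin 2) | ‖x‖ ≤ t} = closedBall 0 t := by
    ext x; exact mem_closedBall_zero_iff.symm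
  rw [hball, Measure.smul_apply, Measure.restrict_apply measurableSet_closedBall, smul_eq_mul,
    EuclideanSpace.volume_closedBall_fin_two, ← e.volume_closedBall_inter_closedBall, map_zero, he,
    hq, volume_closedBall_zero_inter_closedBall_ofReal_eq_integral hR.le hq0, hdensity,
    ENNReal.ofReal_div_of_pos (by positivity), ENNReal.ofReal_mul pi_nonneg,
    ENNReal.ofReal_pow hR.le, ENNReal.div_eq_inv_mul, mul_comm (ENNReal.ofReal π)]
end

section
/- For all real numbers q > R > 0, ∫_{q−R}^{q+R} (2g/(πR²))·arccos((g² + q² − R²)/(2gq)) dg = 1. -/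
/-!
For `q - R < g < q + R` the integrand is `d/dg (A g / (π R²))`, where `A g` is the area of the lens
in which the disc of radius `g` about the origin meets the disc of radius `R` about a point at
distance `q`; i.e. `A g / (π R²)` is the distribution function of the distance. The lens is empty
at `g = q - R` and is the whole disc of radius `R` at `g = q + R`, so the integral is `1`.
-/

open Real Set intervalIntegral

/-- Law of cosines: the cosine of the angle between the sides `a` and `b` of a triangle whose third
side is `c`. -/
noncomputable def triangleCos (a b c : ℝ) : ℝ := (a ^ 2 + b ^ 2 - c ^ 2) / (2 * a * b)

/-- Heron's formula: sixteen times the squared area of a triangle with sides `a`, `b`, `c`. -/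
def heron (a b c : ℝ) : ℝ := (c ^ 2 - (a - b) ^ 2) * ((a + b) ^ 2 - c ^ 2)

/-- The area of the intersection of two discs of radii `r` and `s` whose centres are at distance
`d`, valid when `|r - d| < s < r + d`. -/
noncomputable def lensArea (r s d : ℝ) : ℝ :=
  r ^ 2 * arccos (triangleCos r d s) + s ^ 2 * arccos (triangleCos d s r) - √(heron r d s) / 2

lemma heron_rotate (a b c : ℝ) : heron b c a = heron a b c := by
  unfold heron; ring

lemma heron_pos {a b c : ℝ} (h₁ : |a - b| < c) (h₂ : c < a + b) : 0 < heron a b c := by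
  rw [abs_lt] at h₁
  exact mul_pos (by nlinarith) (by nlinarith)

lemma one_sub_triangleCos_sq {a b : ℝ} (c : ℝ) (ha : a ≠ 0) (hb : b ≠ 0) :
    1 - triangleCos a b c ^ 2 = heron a b c / (2 * a * b) ^ 2 := by
  unfold triangleCos heron
  field_simp
  ring

lemma sqrt_one_sub_triangleCos_sq {a b : ℝ} (c : ℝ) (ha : 0 < a) (hb : 0 < b) :
    √(1 - triangleCos a b c ^ 2) = √(heron a b c) / (2 * a * b) := by
  rw [one_sub_triangleCos_sq c ha.ne' hb.ne', sqrt_div' _ (by positivity), sqrt_sq (by positivity)]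

lemma abs_triangleCos_lt_one {a b c : ℝ} (h₁ : |a - b| < c) (h₂ : c < a + b) :
    |triangleCos a b c| < 1 := by
  have ha : a ≠ 0 := by rw [abs_lt] at h₁; linarith
  have hb : b ≠ 0 := by rw [abs_lt] at h₁; linarith
  have := one_sub_triangleCos_sq c ha hb ▸ div_pos (heron_pos h₁ h₂) (by positivity)
  rw [← sq_lt_one_iff_abs_lt_one]
  linarith

lemma hasDerivAt_arccos_of_abs_lt_one {x : ℝ} (hx : |x| < 1) :
    HasDerivAt arccos (-(1 / √(1 - x ^ 2))) x := by
  rw [abs_lt] at hx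
  exact hasDerivAt_arccos hx.1.ne' hx.2.ne

lemma hasDerivAt_triangleCos_left {a b : ℝ} (c : ℝ) (ha : a ≠ 0) (hb : b ≠ 0) :
    HasDerivAt (fun x => triangleCos x b c) ((a ^ 2 - b ^ 2 + c ^ 2) / (2 * a ^ 2 * b)) a := by
  have := (((hasDerivAt_pow 2 a).add_const (b ^ 2)).sub_const (c ^ 2)).div
    (((hasDerivAt_id' a).const_mul 2).mul_const b) (by simp [ha, hb])
  exact this.congr_deriv (by field_simp; ring)

lemma hasDerivAt_triangleCos_right (a b c : ℝ) :
    HasDerivAt (fun x => triangleCos a b x) (-(2 * c) / (2 * a * b)) c :=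
  (((hasDerivAt_pow 2 c).const_sub (a ^ 2 + b ^ 2)).div_const (2 * a * b)).congr_deriv
    (by norm_num)

lemma hasDerivAt_heron_left (a b c : ℝ) :
    HasDerivAt (fun x => heron x b c) (4 * a * (b ^ 2 + c ^ 2 - a ^ 2)) a := by
  have := ((((hasDerivAt_id' a).sub_const b).pow 2).const_sub (c ^ 2)).mul
    ((((hasDerivAt_id' a).add_const b).pow 2).sub_const (c ^ 2))
  exact this.congr_deriv (by simp only [Pi.pow_apply]; ring)

theorem hasDerivAt_lensArea {r s d : ℝ} (h₁ : |r - d| < s) (h₂ : s < r + d) :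
    HasDerivAt (fun x => lensArea x s d) (2 * r * arccos (triangleCos r d s)) r := by
  have h₁' : |d - s| < r := by rw [abs_lt] at h₁ ⊢; constructor <;> linarith
  have h₂' : r < d + s := by rw [abs_lt] at h₁; linarith
  obtain ⟨hr, hd, hs⟩ : 0 < r ∧ 0 < d ∧ 0 < s := by
    rw [abs_lt] at h₁; refine ⟨?_, ?_, ?_⟩ <;> linarith
  have hA := (hasDerivAt_arccos_of_abs_lt_one (abs_triangleCos_lt_one h₁ h₂)).comp r
    (hasDerivAt_triangleCos_left s hr.ne' hd.ne')
  rw [sqrt_one_sub_triangleCos_sq s hr hd] at hA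
  have hB := (hasDerivAt_arccos_of_abs_lt_one (abs_triangleCos_lt_one h₁' h₂')).comp r
    (hasDerivAt_triangleCos_right d s r)
  rw [sqrt_one_sub_triangleCos_sq r hd hs, heron_rotate] at hB
  have hH : √(heron r d s) ≠ 0 := (sqrt_pos.mpr (heron_pos h₁ h₂)).ne'
  have hC := (hasDerivAt_heron_left r d s).sqrt (heron_pos h₁ h₂).ne'
  refine ((((hasDerivAt_pow 2 r).mul hA).add (hB.const_mul (s ^ 2))).sub
    (hC.div_const 2)).congr_deriv ?_
  simp only [Function.comp_apply]
  -- the `1 / √(heron r d s)` contributions of the three terms cancel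
  field_simp
  ring

lemma continuousOn_arccos_triangleCos_left {b : ℝ} (c : ℝ) (hb : b ≠ 0) :
    ContinuousOn (fun x => arccos (triangleCos x b c)) {0}ᶜ :=
  continuous_arccos.comp_continuousOn <| by
    unfold triangleCos
    exact ContinuousOn.div (by fun_prop) (by fun_prop) fun x hx => by simp_all

lemma continuousOn_lensArea {d : ℝ} (s : ℝ) (hd : d ≠ 0) :
    ContinuousOn (fun x => lensArea x s d) {0}ᶜ := by
  unfold lensArea
  refine (((continuousOn_pow 2).mul (continuousOn_arccos_triangleCos_left s hd)).add ?_).sub ?_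
  · unfold triangleCos; fun_prop
  · unfold heron; fun_prop

lemma lensArea_sub_self {s d : ℝ} (hs : 0 < s) (hsd : s < d) : lensArea (d - s) s d = 0 := by
  have h₁ : triangleCos (d - s) d s = 1 := by
    unfold triangleCos
    rw [div_eq_one_iff_eq (by nlinarith)]
    ring
  have h₂ : triangleCos d s (d - s) = 1 := by
    unfold triangleCos
    rw [div_eq_one_iff_eq (by nlinarith)]
    ring
  simp [lensArea, heron, h₁, h₂]

lemma lensArea_add_self {s d : ℝ} (hs : 0 < s) (hd : 0 < d) :
    lensArea (d + s) s d = π * s ^ 2 := by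
  have h₁ : triangleCos (d + s) d s = 1 := by
    unfold triangleCos
    rw [div_eq_one_iff_eq (by positivity)]
    ring
  have h₂ : triangleCos d s (d + s) = -1 := by
    unfold triangleCos
    rw [div_eq_iff (by positivity)]
    ring
  simp only [lensArea, heron, h₁, h₂, arccos_one, arccos_neg_one, add_sub_cancel_left, sub_self,
    zero_mul, sqrt_zero, zero_div, sub_zero, mul_zero, zero_add]
  ring

/-- For all real numbers `q > R > 0`,
`∫_{q−R}^{q+R} (2g/(πR²))·arccos((g² + q² − R²)/(2gq)) dg = 1`. -/
theorem matern_offset_density_normalization (R q : ℝ) (hR : 0 < R) (hqR : R < q) :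
    ∫ g in (q - R)..(q + R),
        (2 * g / (Real.pi * R ^ 2)) * Real.arccos ((g ^ 2 + q ^ 2 - R ^ 2) / (2 * g * q))
      = 1 := by
  change ∫ g in (q - R)..(q + R), 2 * g / (π * R ^ 2) * arccos (triangleCos g q R) = 1
  have hq : 0 < q := hR.trans hqR
  have hIcc : Icc (q - R) (q + R) ⊆ {0}ᶜ := fun x hx => (show 0 < x by linarith [hx.1]).ne'
  have hderiv : ∀ x ∈ Ioo (q - R) (q + R), HasDerivAt (fun x => lensArea x R q / (π * R ^ 2))
      (2 * x / (π * R ^ 2) * arccos (triangleCos x q R)) x := fun x ⟨hlo, hhi⟩ =>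
    ((hasDerivAt_lensArea (abs_lt.mpr ⟨by linarith, by linarith⟩) (by linarith)).div_const
      _).congr_deriv (by ring)
  have hint : IntervalIntegrable (fun x => 2 * x / (π * R ^ 2) * arccos (triangleCos x q R))
      MeasureTheory.volume (q - R) (q + R) :=
    ((continuous_const.mul continuous_id).div_const _).continuousOn.mul
      ((continuousOn_arccos_triangleCos_left R hq.ne').mono hIcc) |>.intervalIntegrable_of_Icc
      (by linarith)
  rw [integral_eq_sub_of_hasDerivAt_of_le (by linarith)
    (((continuousOn_lensArea R hq.ne').mono hIcc).div_const _) hderiv hint,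
    lensArea_add_self hR hq, lensArea_sub_self hR hqR, zero_div, sub_zero,
    div_self (by positivity)]
end

section
/- Let α > 2, let N be a positive integer, let A > 0, and let s̃ satisfy 0 < s̃ < A^α. Then ∫_A^∞ (1 − (1 + s̃·y^{−α})^{−N})·y dy = (A²/2)·( ₂F₁(−2/α, N; 1 − 2/α; −s̃·A^{−α}) − 1 ), where for |z| < 1 the Gauss hypergeometric function is given by its series ₂F₁(a, b; c; z) = Σ_{k=0}^∞ ((a)_k (b)_k / (c)_k) · z^k / k!, with (x)_k = x(x+1)⋯(x+k−1) the rising Pochhammer symbol. -/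
/-!
For `y > A` put `x = s̃ y^{-α}`, so `0 < x < s̃ A^{-α} < 1` and the negative binomial series
`(1 + x)^{-N} = ∑ₖ C(N-1+k, k) (-x)^k` writes the integrand as `∑_{k ≥ 1} cₖ y^{1-αk}`. As `αk > 2`,
the `k`-th term integrates over `(A, ∞)` to `cₖ A^{2-αk} / (αk - 2)`, and the Pochhammer shift
`(a)ₖ (a + k) = a (a + 1)ₖ` with `a = -2/α` turns this into `A²/2` times the `k`-th term of
`₂F₁(-2/α, N; 1 - 2/α; -s̃ A^{-α})`. Absolute convergence of that series is what allows integrating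
termwise.
-/

open MeasureTheory

/-- The Gauss hypergeometric function `₂F₁(a, b; c; z)` defined by its power series
`Σ_{k=0}^∞ ((a)_k (b)_k / (c)_k) · z^k / k!`, where `(x)_k` is the rising Pochhammer symbol. -/
noncomputable def gaussHyper (a b c z : ℝ) : ℝ :=
  ∑' k : ℕ,
    ((ascPochhammer ℝ k).eval a * (ascPochhammer ℝ k).eval b / (ascPochhammer ℝ k).eval c) *
      z ^ k / (Nat.factorial k)

open Real Set

theorem ascPochhammer_eval_mul_add {S : Type*} [CommSemiring S] (a : S) (k : ℕ) :
    (ascPochhammer S k).eval a * (a + k) = a * (ascPochhammer S k).eval (a + 1) := by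
  rw [← ascPochhammer_succ_eval, ascPochhammer_succ_left]
  simp [Polynomial.eval_comp]

theorem ascPochhammer_eval_natCast_succ (S : Type*) [Semiring S] (M k : ℕ) :
    (ascPochhammer S k).eval ((M + 1 : ℕ) : S) = (k.factorial * (k + M).choose M : ℕ) := by
  rw [ascPochhammer_nat_eq_natCast_ascFactorial, Nat.ascFactorial_eq_factorial_mul_choose,
    add_comm M, Nat.choose_symm_add]

noncomputable def gaussHyperTerm (a b c z : ℝ) (k : ℕ) : ℝ :=
  ((ascPochhammer ℝ k).eval a * (ascPochhammer ℝ k).eval b / (ascPochhammer ℝ k).eval c) *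
    z ^ k / (Nat.factorial k)

theorem gaussHyper_eq_tsum (a b c z : ℝ) : gaussHyper a b c z = ∑' k, gaussHyperTerm a b c z k :=
  rfl

@[simp]
theorem gaussHyperTerm_zero (a b c z : ℝ) : gaussHyperTerm a b c z 0 = 1 := by
  simp [gaussHyperTerm]

theorem gaussHyperTerm_succ_natCast_succ {a : ℝ} (ha : 0 < a + 1) (M : ℕ) (z : ℝ) (n : ℕ) :
    gaussHyperTerm a (M + 1 : ℕ) (a + 1) z (n + 1) =
      a / (a + (n + 1 : ℕ)) * (n + 1 + M).choose M * z ^ (n + 1) := by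
  have hpos : 0 < (ascPochhammer ℝ (n + 1)).eval (a + 1) := ascPochhammer_pos _ _ ha
  have hk : a + (n + 1 : ℕ) ≠ 0 := by push_cast; linarith [(n.cast_nonneg : (0 : ℝ) ≤ n)]
  have hquot : (ascPochhammer ℝ (n + 1)).eval a / (ascPochhammer ℝ (n + 1)).eval (a + 1) =
      a / (a + (n + 1 : ℕ)) := by
    rw [div_eq_div_iff hpos.ne' hk, ascPochhammer_eval_mul_add]
  rw [gaussHyperTerm, ascPochhammer_eval_natCast_succ, mul_div_right_comm (Polynomial.eval a _),
    hquot]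
  push_cast
  field_simp

theorem summable_abs_gaussHyperTerm_succ {a : ℝ} (ha : 0 < a + 1) (M : ℕ) {z : ℝ} (hz : |z| < 1) :
    Summable fun n => |gaussHyperTerm a (M + 1 : ℕ) (a + 1) z (n + 1)| := by
  have hgeom : Summable fun n : ℕ => ((n + 1 + M).choose M : ℝ) * |z| ^ (n + 1) :=
    (summable_nat_add_iff (f := fun n : ℕ => ((n + M).choose M : ℝ) * |z| ^ n) 1).mpr <|
      summable_choose_mul_geometric_of_norm_lt_one M (by rwa [Real.norm_eq_abs, abs_abs])
  refine .of_nonneg_of_le (fun _ => abs_nonneg _) (fun n => ?_) (hgeom.mul_left (|a| / (a + 1)))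
  have hn : a + 1 ≤ a + (n + 1 : ℕ) := by push_cast; linarith [(n.cast_nonneg : (0 : ℝ) ≤ n)]
  rw [gaussHyperTerm_succ_natCast_succ ha, abs_mul, abs_mul, abs_div, abs_of_pos (ha.trans_le hn),
    Nat.abs_cast, abs_pow, mul_assoc]
  gcongr

theorem hasSum_one_sub_one_add_rpow_neg (M : ℕ) {x : ℝ} (hx : |x| < 1) :
    HasSum (fun n => -((n + 1 + M).choose M * (-x) ^ (n + 1)))
      (1 - (1 + x) ^ (-((M + 1 : ℕ) : ℝ))) := by
  have h := hasSum_choose_mul_geometric_of_norm_lt_one M (r := -x) (by rwa [norm_neg])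
  have hx' : 0 ≤ 1 + x := by linarith [neg_abs_le x]
  rw [rpow_neg hx', rpow_natCast]
  simpa [sub_eq_add_neg, add_comm] using ((hasSum_nat_add_iff' 1).mpr h).neg

theorem rpow_sub_mul_natCast {y : ℝ} (hy : 0 < y) (b c : ℝ) (k : ℕ) :
    y ^ (b - c * k) = y ^ b * (y ^ (-c)) ^ k := by
  rw [sub_eq_add_neg, rpow_add hy, ← neg_mul, rpow_mul_natCast hy.le]

theorem hasSum_integral_Ioi_tsum_mul_rpow {A : ℝ} (hA : 0 < A) {c p : ℕ → ℝ}
    (hp : ∀ n, p n < -1) (hs : Summable fun n => ‖c n * (-A ^ (p n + 1) / (p n + 1))‖) :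
    HasSum (fun n => c n * (-A ^ (p n + 1) / (p n + 1)))
      (∫ y in Ioi A, ∑' n, c n * y ^ p n) := by
  have hint (n : ℕ) : IntegrableOn (fun y => c n * y ^ p n) (Ioi A) :=
    (integrableOn_Ioi_rpow_of_lt (hp n) hA).const_mul _
  have hval (n : ℕ) : ∫ y in Ioi A, c n * y ^ p n = c n * (-A ^ (p n + 1) / (p n + 1)) := by
    rw [integral_const_mul, integral_Ioi_rpow_of_lt (hp n) hA]
  have hnorm (n : ℕ) : ∫ y in Ioi A, ‖c n * y ^ p n‖ = ‖c n * (-A ^ (p n + 1) / (p n + 1))‖ := by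
    have hpos : 0 ≤ -A ^ (p n + 1) / (p n + 1) :=
      div_nonneg_of_nonpos (by simp [(rpow_pos_of_pos hA _).le]) (by linarith [hp n])
    rw [norm_mul, Real.norm_of_nonneg hpos, ← integral_Ioi_rpow_of_lt (hp n) hA,
      ← integral_const_mul]
    refine setIntegral_congr_fun measurableSet_Ioi fun y hy => ?_
    rw [norm_mul, Real.norm_of_nonneg (rpow_pos_of_pos (hA.trans hy) _).le]
  simpa only [hval] using
    hasSum_integral_of_summable_integral_norm hint (by simpa only [hnorm] using hs)

theorem hasSum_interference_integrand (M : ℕ) {s α y : ℝ} (hy : 0 < y)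
    (hx : |s * y ^ (-α)| < 1) :
    HasSum (fun n => -((n + 1 + M).choose M * (-s) ^ (n + 1)) * y ^ (1 - α * (n + 1 : ℕ)))
      ((1 - (1 + s * y ^ (-α)) ^ (-((M + 1 : ℕ) : ℝ))) * y) := by
  refine ((hasSum_one_sub_one_add_rpow_neg M hx).mul_right y).congr_fun fun n => ?_
  rw [rpow_sub_mul_natCast hy, rpow_one, neg_mul_eq_neg_mul s, mul_pow]
  ring

theorem interference_term_eq_gaussHyperTerm {α : ℝ} (hα : 2 < α) {A : ℝ} (hA : 0 < A) (s : ℝ)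
    (M n : ℕ) :
    -((n + 1 + M).choose M * (-s) ^ (n + 1)) *
        (-A ^ (1 - α * (n + 1 : ℕ) + 1) / (1 - α * (n + 1 : ℕ) + 1)) =
      A ^ 2 / 2 * gaussHyperTerm (-2 / α) (M + 1 : ℕ) (-2 / α + 1) (-(s * A ^ (-α))) (n + 1) := by
  have hn : (0 : ℝ) ≤ n := n.cast_nonneg
  have hα' : 2 / α < 1 := (div_lt_one (by linarith)).mpr hα
  have hk : 2 - α * (n + 1) ≠ 0 := by nlinarith
  have hk' : -2 / α + (n + 1) ≠ 0 := by rw [neg_div]; linarith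
  have hratio : -2 / α / (-2 / α + (n + 1)) = 2 / (2 - α * (n + 1)) := by
    rw [div_eq_div_iff hk' hk]; field_simp; ring
  rw [gaussHyperTerm_succ_natCast_succ (by rw [neg_div]; linarith),
    show 1 - α * (n + 1 : ℕ) + 1 = 2 - α * (n + 1 : ℕ) by ring, rpow_sub_mul_natCast hA,
    rpow_two, neg_mul_eq_neg_mul s, mul_pow]
  push_cast
  rw [hratio]
  field_simp

/-- For `α > 2`, a positive integer `N`, `A > 0` and `0 < s̃ < A^α`,
`∫_A^∞ (1 − (1 + s̃·y^{−α})^{−N})·y dy = (A²/2)·(₂F₁(−2/α, N; 1 − 2/α; −s̃·A^{−α}) − 1)`. -/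
theorem interference_integral_closed_form
    (α : ℝ) (hα : 2 < α) (N : ℕ) (hN : 0 < N) (A : ℝ) (hA : 0 < A)
    (st : ℝ) (hst0 : 0 < st) (hst : st < A ^ α) :
    ∫ y in Set.Ioi A, (1 - (1 + st * y ^ (-α)) ^ (-(N : ℝ))) * y
      = (A ^ 2 / 2) *
          (gaussHyper (-2 / α) (N : ℝ) (1 - 2 / α) (-(st * A ^ (-α))) - 1) := by
  obtain ⟨M, rfl⟩ : ∃ M, N = M + 1 := ⟨N - 1, by omega⟩
  have hr : |st * A ^ (-α)| < 1 := by
    rw [abs_of_pos (by positivity), rpow_neg hA.le, ← div_eq_mul_inv, div_lt_one (by positivity)]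
    exact hst
  have ha : 0 < -2 / α + 1 := by
    have : 2 / α < 1 := (div_lt_one (by linarith)).mpr hα
    rw [neg_div]; linarith
  have hp (n : ℕ) : 1 - α * (n + 1 : ℕ) < -1 := by
    nlinarith [(n.cast_nonneg : (0 : ℝ) ≤ n), Nat.cast_succ (R := ℝ) n]
  have hexpand : EqOn (fun y => (1 - (1 + st * y ^ (-α)) ^ (-((M + 1 : ℕ) : ℝ))) * y)
      (fun y => ∑' n, -((n + 1 + M).choose M * (-st) ^ (n + 1)) * y ^ (1 - α * (n + 1 : ℕ)))
      (Ioi A) := fun y hy => by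
    have hy0 : 0 < y := hA.trans hy
    have hx : |st * y ^ (-α)| < 1 := hr.trans_le' <| by
      rw [abs_of_pos (by positivity), abs_of_pos (by positivity)]
      exact mul_le_mul_of_nonneg_left (rpow_le_rpow_of_nonpos hA hy.le (by linarith)) hst0.le
    exact (hasSum_interference_integrand M hy0 hx).tsum_eq.symm
  have hsum := hasSum_integral_Ioi_tsum_mul_rpow hA hp
      (c := fun n => -((n + 1 + M).choose M * (-st) ^ (n + 1))) <| by
    simpa only [interference_term_eq_gaussHyperTerm hα hA, norm_mul, Real.norm_eq_abs] using
      (summable_abs_gaussHyperTerm_succ ha M (by rwa [abs_neg])).mul_left |A ^ 2 / 2|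
  simp only [interference_term_eq_gaussHyperTerm hα hA] at hsum
  rw [← setIntegral_congr_fun measurableSet_Ioi hexpand] at hsum
  have hshift := (summable_mul_left_iff (by positivity : A ^ 2 / 2 ≠ 0)).mp hsum.summable
  rw [show 1 - 2 / α = -2 / α + 1 by ring, gaussHyper_eq_tsum, tsum_eq_zero_add' hshift,
    gaussHyperTerm_zero, add_sub_cancel_left, ← tsum_mul_left, hsum.tsum_eq]
end
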